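/- Let (W,S) be a Coxeter system and let s_i, s_j, s_k be three distinct generators in S such that the orders m_{ij}, m_{ik}, m_{kj} of the products s_is_j, s_is_k, s_ks_j are each finite and odd. Then s_j s_k s_j and s_k s_i s_k s_i s_k generate an infinite dihedral group; equivalently, the element (s_j s_k s_j)·(s_k s_i s_k s_i s_k) has infinite order in W. -/

import Mathlib

/-!
Let `W` act on `V = ⊕_{s ∈ S} ℝ α_s` by its geometric representation: with
`B(α_a, α_b) = -cos (π / m_ab)`, the generator `s_a` acts as the reflection
`v ↦ v - 2 B(α_a, v) α_a`. The elements `s_j s_k s_j` and `s_k s_i s_k s_i s_k` then act as the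
reflections in the roots `x = s_j α_k` and `y = s_k s_i α_k`, and `B(x, y) = -F` with
`F = 1 - 2c₂² + 4c₁c₂c₃ + 2c₃²(4c₂² - 1)`, where `c₁, c₂, c₃` are the cosines of `π/m_ij`,
`π/m_ik`, `π/m_kj`. Odd `m ≥ 3` gives `c ≥ 1/2`, hence `F ≥ 1`.

For two reflections whose roots pair to `-c`, the powers of their product send
`U_k(c) x + U_{k-1}(c) y` to `U_{k+2n}(c) x + U_{k+2n-1}(c) y` (Chebyshev polynomials of the
second kind). For `c = cos (π/m)` the sequence `U_k(c)` is `2m`-periodic; since both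
reflections also fix the common kernel of their coroots, a complement of `span {x, y}` as
`c² ≠ 1`, this yields the dihedral relations and hence the representation. For `c ≥ 1` the
sequence grows without bound, so the product has infinite order.
-/

open Module Real Polynomial Polynomial.Chebyshev

lemma Real.sin_pi_div_pos {m : ℕ} (hm : 2 ≤ m) : 0 < sin (π / m) := by
  have hm' : (2 : ℝ) ≤ m := by exact_mod_cast hm
  refine sin_pos_of_pos_of_lt_pi (by positivity) ?_
  rw [div_lt_iff₀ (by linarith)]
  nlinarith [pi_pos]

lemma Real.half_le_cos_pi_div {m : ℕ} (hm : 3 ≤ m) : 1 / 2 ≤ cos (π / m) := by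
  have hm' : (3 : ℝ) ≤ m := by exact_mod_cast hm
  rw [← cos_pi_div_three]
  exact cos_le_cos_of_nonneg_of_le_pi (by positivity) (by linarith [pi_pos])
    (div_le_div_of_nonneg_left pi_pos.le (by norm_num) hm')

namespace Polynomial.Chebyshev

lemma U_real_eval_cos_pi_div_add_two_mul {m : ℕ} (hm : 2 ≤ m) (k : ℤ) :
    (U ℝ (k + 2 * m)).eval (cos (π / m)) = (U ℝ k).eval (cos (π / m)) := by
  refine mul_right_cancel₀ (sin_pi_div_pos hm).ne' ?_
  have hangle : ((k + 2 * m : ℤ) + 1 : ℝ) * (π / m) = (k + 1) * (π / m) + 2 * π := by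
    push_cast
    field_simp
    ring
  rw [U_real_cos, U_real_cos, hangle, sin_add_two_pi]

lemma le_U_real_eval {c : ℝ} (hc : 1 ≤ c) (n : ℕ) : (n : ℝ) + 1 ≤ (U ℝ n).eval c := by
  suffices ∀ n : ℕ, (n : ℝ) + 1 ≤ (U ℝ n).eval c ∧ (U ℝ n).eval c + 1 ≤ (U ℝ (n + 1)).eval c from
    (this n).1
  intro n
  induction n with
  | zero => exact ⟨by simp, by simpa [U_one, one_add_one_eq_two] using (by linarith : 2 ≤ 2 * c)⟩
  | succ n ih =>
    have hrec : (U ℝ ((n + 1 : ℕ) + 1 : ℤ)).eval c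
        = 2 * c * (U ℝ (n + 1 : ℕ)).eval c - (U ℝ n).eval c := by
      rw [U_add_one]; simp
    push_cast at ih hrec ⊢
    constructor
    · linarith
    · nlinarith

end Polynomial.Chebyshev

namespace Module

variable {V : Type*} [AddCommGroup V] [Module ℝ V] {x y : V} {f g : Dual ℝ V}

lemma eq_one_of_fixes_of_fixes_ker {T : V ≃ₗ[ℝ] V} (hx : T x = x) (hy : T y = y)
    (hker : ∀ z, f z = 0 → g z = 0 → T z = z) (hdet : f x * g y - f y * g x ≠ 0) : T = 1 := by
  have hdet' : g y * f x - f y * g x ≠ 0 := by rwa [mul_comm (g y)]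
  ext v
  -- Cramer's rule: `v - a • x - b • y` lies in both kernels.
  set a := (f v * g y - f y * g v) / (f x * g y - f y * g x)
  set b := (f x * g v - f v * g x) / (f x * g y - f y * g x)
  have hfz : f (v - a • x - b • y) = 0 := by
    simp only [map_sub, map_smul, smul_eq_mul, a, b]
    field_simp
    ring
  have hgz : g (v - a • x - b • y) = 0 := by
    simp only [map_sub, map_smul, smul_eq_mul, a, b]
    field_simp
    ring
  have hz := hker _ hfz hgz
  rw [map_sub, map_sub, map_smul, map_smul, hx, hy] at hz
  simpa using hz

lemma apply_reflection_eq_two (hf : f x = 2) (hg : g y = 2) :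
    (g - g x • f) (reflection hf y) = 2 := by
  simp only [LinearMap.sub_apply, LinearMap.smul_apply, reflection_apply, map_sub, map_smul, hf,
    hg, smul_eq_mul]
  ring

lemma reflection_mul_reflection_mul_reflection (hf : f x = 2) (hg : g y = 2) :
    reflection hf * reflection hg * reflection hf = reflection (apply_reflection_eq_two hf hg) := by
  ext z
  simp only [LinearEquiv.mul_apply, reflection_apply, LinearMap.sub_apply, LinearMap.smul_apply,
    map_sub, map_smul, hf, smul_eq_mul]
  module

variable (hf : f x = 2) (hg : g y = 2) {c : ℝ}

/- In the coordinates `(a, b) ↦ a • x + b • y` the product acts as the square of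
`(a, b) ↦ (2 c a - b, a)`, whose powers are given by the recursion of `U`. -/
lemma reflection_mul_reflection_pow_apply_eval_U (hfy : f y = -2 * c) (hgx : g x = -2 * c)
    (n : ℕ) (k : ℤ) :
    ((reflection hf * reflection hg) ^ n) ((U ℝ k).eval c • x + (U ℝ (k - 1)).eval c • y) =
      (U ℝ (k + 2 * n)).eval c • x + (U ℝ (k + 2 * n - 1)).eval c • y := by
  have hU (l : ℤ) : (U ℝ (l + 1)).eval c = 2 * c * (U ℝ l).eval c - (U ℝ (l - 1)).eval c := by
    simp [U_add_one]
  induction n generalizing k with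
  | zero => simp
  | succ n ih =>
    have hstep : (reflection hf * reflection hg) ((U ℝ k).eval c • x + (U ℝ (k - 1)).eval c • y)
        = (U ℝ (k + 2)).eval c • x + (U ℝ (k + 2 - 1)).eval c • y := by
      rw [show k + 2 = k + 1 + 1 by ring, hU (k + 1), add_sub_cancel_right, add_sub_cancel_right,
        hU k]
      simp only [LinearEquiv.mul_apply, reflection_apply, map_add, map_sub, map_smul, hf, hg, hfy,
        hgx]
      module
    rw [pow_succ, LinearEquiv.mul_apply, hstep, ih]
    push_cast
    ring_nf

theorem reflection_mul_reflection_pow_eq_one {m : ℕ} (hm : 2 ≤ m) (hfy : f y = -2 * cos (π / m))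
    (hgx : g x = -2 * cos (π / m)) : (reflection hf * reflection hg) ^ m = 1 := by
  have horbit (k : ℤ) := reflection_mul_reflection_pow_apply_eval_U hf hg hfy hgx m k
  simp only [U_real_eval_cos_pi_div_add_two_mul hm, add_sub_right_comm] at horbit
  refine eq_one_of_fixes_of_fixes_ker (x := x) (y := y) (f := f) (g := g)
    (by simpa using horbit 0) (by simpa using horbit (-1)) (fun z hfz hgz => ?_) ?_
  · have hfix : (reflection hf * reflection hg) z = z := by simp [reflection_apply, hfz, hgz]
    rw [LinearEquiv.pow_apply]
    exact Function.iterate_fixed hfix m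
  · have := sin_sq_add_cos_sq (π / m)
    have := sin_pi_div_pos hm
    rw [hf, hg, hfy, hgx]
    nlinarith

theorem not_isOfFinOrder_reflection_mul_reflection (hc : 1 ≤ c) (hfy : f y = -2 * c)
    (hgx : g x = -2 * c) (hxy : LinearIndependent ℝ ![x, y]) :
    ¬ IsOfFinOrder (reflection hf * reflection hg) := by
  rw [isOfFinOrder_iff_pow_eq_one]
  rintro ⟨n, hn, hpow⟩
  have horbit := reflection_mul_reflection_pow_apply_eval_U hf hg hfy hgx n 0
  obtain ⟨l, hl⟩ : ∃ l : ℕ, (2 * n - 1 : ℤ) = l := ⟨2 * n - 1, by omega⟩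
  simp only [hpow, zero_add, hl, zero_sub, U_zero, U_neg_one, eval_one, eval_zero, one_smul,
    zero_smul, add_zero, LinearEquiv.coe_one, id_eq] at horbit
  have hcoeff := LinearIndependent.pair_iff.mp hxy ((U ℝ (2 * n : ℤ)).eval c - 1) ((U ℝ l).eval c)
    (by rw [sub_smul, one_smul, sub_add_eq_add_sub, ← horbit, sub_self])
  linarith [hcoeff.2, le_U_real_eval hc l]

end Module

namespace CoxeterMatrix

variable {B : Type*} (M : CoxeterMatrix B)

/- The standard bilinear form `B(α_a, α_b)`; `M a b = 0` encodes `m_ab = ∞`. -/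
noncomputable def bilinCoeff (a b : B) : ℝ := if M a b = 0 then -1 else -cos (π / M a b)

noncomputable def coroot (a : B) : Dual ℝ (B →₀ ℝ) :=
  Finsupp.linearCombination ℝ fun b => 2 * M.bilinCoeff a b

lemma bilinCoeff_self (a : B) : M.bilinCoeff a a = 1 := by simp [bilinCoeff]

lemma bilinCoeff_comm (a b : B) : M.bilinCoeff a b = M.bilinCoeff b a := by
  rw [bilinCoeff, bilinCoeff, M.symmetric]

lemma bilinCoeff_of_ne_zero {a b : B} (h : M a b ≠ 0) : M.bilinCoeff a b = -cos (π / M a b) :=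
  if_neg h

@[simp]
lemma coroot_single (a b : B) : M.coroot a (Finsupp.single b 1) = 2 * M.bilinCoeff a b := by
  simp [coroot]

lemma coroot_single_self (a : B) : M.coroot a (Finsupp.single a 1) = 2 := by
  simp [bilinCoeff_self]

noncomputable def simpleReflection (a : B) : (B →₀ ℝ) ≃ₗ[ℝ] (B →₀ ℝ) :=
  reflection (M.coroot_single_self a)

lemma isLiftable_simpleReflection : M.IsLiftable M.simpleReflection := by
  intro a b
  rcases eq_or_ne a b with rfl | hab
  · rw [M.diagonal, pow_one]
    exact LinearEquiv.ext (involutive_reflection (M.coroot_single_self a))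
  rcases eq_or_ne (M a b) 0 with h0 | h0
  · rw [h0, pow_zero]
  · have := M.off_diagonal a b hab
    refine reflection_mul_reflection_pow_eq_one _ _ (by omega) ?_ ?_
    · rw [coroot_single, M.bilinCoeff_of_ne_zero h0]; ring
    · rw [coroot_single, M.bilinCoeff_comm, M.bilinCoeff_of_ne_zero h0]; ring

lemma three_le_of_odd {a b : B} (hab : a ≠ b) (h : Odd (M a b)) : 3 ≤ M a b := by
  have := M.off_diagonal a b hab
  obtain ⟨r, hr⟩ := h
  omega

end CoxeterMatrix

namespace CoxeterSystem

variable {B W : Type*} [Group W] {M : CoxeterMatrix B} (cs : CoxeterSystem M W)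

noncomputable def geometricRepresentation : W →* ((B →₀ ℝ) ≃ₗ[ℝ] (B →₀ ℝ)) :=
  cs.lift ⟨M.simpleReflection, M.isLiftable_simpleReflection⟩

lemma geometricRepresentation_simple (a : B) :
    cs.geometricRepresentation (cs.simple a) = reflection (M.coroot_single_self a) :=
  cs.lift_apply_simple _ a

lemma geometricRepresentation_eq_reflection_mul_reflection (i j k : B) :
    cs.geometricRepresentation ((cs.simple j * cs.simple k * cs.simple j) *
      (cs.simple k * cs.simple i * cs.simple k * cs.simple i * cs.simple k)) =
      reflection (apply_reflection_eq_two (M.coroot_single_self j) (M.coroot_single_self k)) *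
        reflection (apply_reflection_eq_two (M.coroot_single_self k)
          (apply_reflection_eq_two (M.coroot_single_self i) (M.coroot_single_self k))) := by
  simp only [map_mul, cs.geometricRepresentation_simple]
  rw [reflection_mul_reflection_mul_reflection,
    ← reflection_mul_reflection_mul_reflection (M.coroot_single_self k)
      (apply_reflection_eq_two (M.coroot_single_self i) (M.coroot_single_self k)),
    ← reflection_mul_reflection_mul_reflection (M.coroot_single_self i) (M.coroot_single_self k)]
  simp only [mul_assoc]

/- The right side of `hF` is `-B(s_j α_k, s_k s_i α_k)`. -/
theorem not_isOfFinOrder_simple_conj_mul {i j k : B} (hij : i ≠ j) (hik : i ≠ k) (hjk : j ≠ k)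
    (hβ : M.bilinCoeff i k ≠ 0)
    (hF : 1 ≤ 1 - 2 * M.bilinCoeff i k ^ 2 - 4 * M.bilinCoeff i j * M.bilinCoeff i k *
      M.bilinCoeff k j + 2 * M.bilinCoeff k j ^ 2 * (4 * M.bilinCoeff i k ^ 2 - 1)) :
    ¬ IsOfFinOrder ((cs.simple j * cs.simple k * cs.simple j) *
      (cs.simple k * cs.simple i * cs.simple k * cs.simple i * cs.simple k)) := by
  have hi := M.coroot_single_self i
  have hj := M.coroot_single_self j
  have hk := M.coroot_single_self k
  have hβji := M.bilinCoeff_comm j i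
  have hβki := M.bilinCoeff_comm k i
  have hβjk := M.bilinCoeff_comm j k
  intro hfin
  have himage := cs.geometricRepresentation.isOfFinOrder hfin
  rw [geometricRepresentation_eq_reflection_mul_reflection] at himage
  refine not_isOfFinOrder_reflection_mul_reflection _ _ hF ?_ ?_ ?_ himage
  · simp only [LinearMap.sub_apply, LinearMap.smul_apply, reflection_apply, map_sub, map_smul,
      M.coroot_single, smul_eq_mul, M.bilinCoeff_self, hβji, hβki, hβjk]
    ring
  · simp only [LinearMap.sub_apply, LinearMap.smul_apply, reflection_apply, map_sub, map_smul,
      M.coroot_single, smul_eq_mul, M.bilinCoeff_self, hβki, hβjk]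
    ring
  · have hx : reflection hj (Finsupp.single k 1) =
        Finsupp.single k 1 - (2 * M.bilinCoeff k j) • Finsupp.single j 1 := by
      rw [reflection_apply, M.coroot_single, hβjk]
    have hy : reflection hk (reflection hi (Finsupp.single k 1)) =
        (-2 * M.bilinCoeff i k) • Finsupp.single i 1 +
          (4 * M.bilinCoeff i k ^ 2 - 1) • Finsupp.single k 1 := by
      simp only [reflection_apply, map_sub, map_smul, M.coroot_single, M.bilinCoeff_self, hβki]
      module
    rw [hx, hy, LinearIndependent.pair_iff]
    intro s t hst
    have ht : t = 0 := by simpa [hij, hik, hβ] using congrArg (· i) hst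
    have hs : s = 0 := by simpa [ht, hik.symm, hjk.symm] using congrArg (· k) hst
    exact ⟨hs, ht⟩

end CoxeterSystem

theorem statement7_general {B : Type*} {M : CoxeterMatrix B} {W : Type*} [Group W]
    (cs : CoxeterSystem M W)
    (i j k : B) (hij : i ≠ j) (hik : i ≠ k) (hjk : j ≠ k)
    (hmij' : Odd (M i j))
    (hmik' : Odd (M i k))
    (hmkj' : Odd (M k j)) :
    ¬ IsOfFinOrder ((cs.simple j * cs.simple k * cs.simple j) *
      (cs.simple k * cs.simple i * cs.simple k * cs.simple i * cs.simple k)) := by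
  have hc₁ := half_le_cos_pi_div (M.three_le_of_odd hij hmij')
  have hc₂ := half_le_cos_pi_div (M.three_le_of_odd hik hmik')
  have hc₃ := half_le_cos_pi_div (M.three_le_of_odd hjk.symm hmkj')
  have hβij := M.bilinCoeff_of_ne_zero hmij'.pos.ne'
  have hβik := M.bilinCoeff_of_ne_zero hmik'.pos.ne'
  have hβkj := M.bilinCoeff_of_ne_zero hmkj'.pos.ne'
  refine cs.not_isOfFinOrder_simple_conj_mul hij hik hjk (by rw [hβik]; linarith) ?_
  rw [hβij, hβik, hβkj]
  nlinarith [mul_nonneg (sub_nonneg.2 hc₂) (sub_nonneg.2 hc₃),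
    mul_nonneg (mul_nonneg (sub_nonneg.2 hc₁) (sub_nonneg.2 hc₂)) (sub_nonneg.2 hc₃)]

/-- Let `(W,S)` be a Coxeter system and `s_i, s_j, s_k` three distinct
generators such that the orders `m i j`, `m i k`, `m k j` are each finite and odd (`0` encodes
`∞`).  Then `s_j s_k s_j` and `s_k s_i s_k s_i s_k` generate an infinite dihedral group;
equivalently, their product has infinite order in `W`. -/
theorem statement7 {B : Type*} {M : CoxeterMatrix B} {W : Type*} [Group W]
    (cs : CoxeterSystem M W)
    (i j k : B) (hij : i ≠ j) (hik : i ≠ k) (hjk : j ≠ k)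
    (hmij : M i j ≠ 0) (hmij' : Odd (M i j))
    (hmik : M i k ≠ 0) (hmik' : Odd (M i k))
    (hmkj : M k j ≠ 0) (hmkj' : Odd (M k j)) :
    ¬ IsOfFinOrder ((cs.simple j * cs.simple k * cs.simple j) *
      (cs.simple k * cs.simple i * cs.simple k * cs.simple i * cs.simple k)) :=
  statement7_general cs i j k hij hik hjk hmij' hmik' hmkj'
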